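/- arXiv:2305.05712 — 3 statements merged into one kernel-verified Lean document; each statement's English description precedes it below -/
import Mathlib

section
/- Let j ∈ ℂ be a primitive 3rd root of unity and let A = (1/√2)·[[1, 1], [-1, 1]] and B = [[j, 0], [0, j²]] in GL₂(ℂ). Then B² = A²BA⁻², det A = 1, and det B = 1; consequently the assignment a ↦ A, b ↦ B extends (uniquely) to a group homomorphism ρ₁ : Γ₀ → GL₂(ℂ) whose image lies in SL₂(ℂ). -/
open Matrix

/-- The single relator `b² · a² · b⁻¹ · a⁻²` of the presented group
`Γ₀ = ⟨a, b ∣ b² = a²ba⁻²⟩`, where `a` is letter `0` and `b` is letter `1`. -/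
def gammaRels : Set (FreeGroup (Fin 2)) :=
  {FreeGroup.of 1 ^ 2 * FreeGroup.of 0 ^ 2 * (FreeGroup.of 1)⁻¹ * ((FreeGroup.of 0)⁻¹) ^ 2}

/-- The group `Γ₀ = ⟨a, b ∣ b² = a²ba⁻²⟩`. -/
abbrev Gamma0 : Type := PresentedGroup gammaRels

/-- The matrix `A = (1/√2)·[[1, 1], [-1, 1]]`. -/
noncomputable def matA : Matrix (Fin 2) (Fin 2) ℂ :=
  (1 / (Real.sqrt 2 : ℂ)) • !![1, 1; -1, 1]

/-- The matrix `B = [[j, 0], [0, j²]]`. -/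
def matB (j : ℂ) : Matrix (Fin 2) (Fin 2) ℂ := !![j, 0; 0, j ^ 2]

/-!
Conjugation by `A² = [[0, 1], [-1, 0]]` swaps the two diagonal entries of a diagonal matrix, so
`A² B A⁻² = diag(j², j)`, which is `B²` because `j³ = 1`. Hence `A, B` satisfy the defining relation
of `Γ₀` in `GL₂(ℂ)` and the universal property of the presented group gives `ρ₁`. Finally
`det ∘ ρ₁` is trivial on the generators (`det A = det B = 1`), hence trivial.
-/

theorem PresentedGroup.existsUnique_toGroup {α G : Type*} [Group G] {rels : Set (FreeGroup α)}
    {f : α → G} (h : ∀ r ∈ rels, FreeGroup.lift f r = 1) :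
    ∃! φ : PresentedGroup rels →* G, ∀ i, φ (.of i) = f i :=
  ⟨PresentedGroup.toGroup h, fun _ => PresentedGroup.toGroup.of h,
    fun _ hφ => PresentedGroup.ext fun i => (hφ i).trans (PresentedGroup.toGroup.of h).symm⟩

theorem PresentedGroup.det_eq_one_of_forall_of {α R n : Type*} [CommRing R] [Fintype n]
    [DecidableEq n] {rels : Set (FreeGroup α)} (ρ : PresentedGroup rels →* GL n R)
    (h : ∀ i, (ρ (.of i) : Matrix n n R).det = 1) (γ : PresentedGroup rels) :
    (ρ γ : Matrix n n R).det = 1 := by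
  have hdet : GeneralLinearGroup.det.comp ρ = 1 :=
    PresentedGroup.ext fun i => Units.ext (by simpa using h i)
  simpa using congr(($hdet γ : R))

theorem gammaRels_lift_eq_one {G : Type*} [Group G] {x y : G}
    (h : y ^ 2 = x ^ 2 * y * x⁻¹ ^ 2) : ∀ r ∈ gammaRels, FreeGroup.lift ![x, y] r = 1 := by
  rintro r rfl
  simp only [map_mul, map_pow, map_inv, FreeGroup.lift_apply_of, Matrix.cons_val_zero,
    Matrix.cons_val_one, h]
  group

theorem one_div_sqrt_two_sq : (1 / (Real.sqrt 2 : ℂ)) ^ 2 = 1 / 2 := by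
  rw [div_pow, one_pow, ← Complex.ofReal_pow, Real.sq_sqrt zero_le_two, Complex.ofReal_ofNat]

theorem matA_sq : matA ^ 2 = !![0, 1; -1, 0] := by
  rw [matA, smul_pow, one_div_sqrt_two_sq]
  ext i k; fin_cases i <;> fin_cases k <;> norm_num [sq]

theorem det_matA : matA.det = 1 := by
  rw [matA, det_smul, Fintype.card_fin, one_div_sqrt_two_sq, det_fin_two_of]
  norm_num

theorem matA_inv_sq : matA⁻¹ ^ 2 = !![0, -1; 1, 0] := by
  rw [inv_pow', matA_sq]
  exact inv_eq_left_inv (by simp [one_fin_two])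

section

variable {j : ℂ}

theorem matB_sq (hj : j ^ 3 = 1) : matB j ^ 2 = !![j ^ 2, 0; 0, j] := by
  have hj4 : (j ^ 2) ^ 2 = j := by linear_combination j * hj
  rw [matB, sq, mul_fin_two]
  simp [← sq, hj4]

theorem det_matB (hj : j ^ 3 = 1) : (matB j).det = 1 := by
  simpa [matB, det_fin_two_of, ← pow_succ'] using hj

theorem matB_sq_eq_conj (hj : j ^ 3 = 1) : matB j ^ 2 = matA ^ 2 * matB j * matA⁻¹ ^ 2 := by
  rw [matB_sq hj, matA_sq, matA_inv_sq, matB]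
  simp

end

theorem rho1_exists (j : ℂ) (hj : IsPrimitiveRoot j 3) :
    matB j ^ 2 = matA ^ 2 * matB j * matA⁻¹ ^ 2 ∧
    matA.det = 1 ∧ (matB j).det = 1 ∧
    (∃! ρ : Gamma0 →* GL (Fin 2) ℂ,
      (ρ (PresentedGroup.of 0) : Matrix (Fin 2) (Fin 2) ℂ) = matA ∧
      (ρ (PresentedGroup.of 1) : Matrix (Fin 2) (Fin 2) ℂ) = matB j) ∧
    (∀ ρ : Gamma0 →* GL (Fin 2) ℂ,
      (ρ (PresentedGroup.of 0) : Matrix (Fin 2) (Fin 2) ℂ) = matA →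
      (ρ (PresentedGroup.of 1) : Matrix (Fin 2) (Fin 2) ℂ) = matB j →
      ∀ γ : Gamma0, (ρ γ : Matrix (Fin 2) (Fin 2) ℂ).det = 1) := by
  have hj3 : j ^ 3 = 1 := hj.pow_eq_one
  let A := GeneralLinearGroup.mkOfDetNeZero matA (by simp [det_matA])
  let B := GeneralLinearGroup.mkOfDetNeZero (matB j) (by simp [det_matB hj3])
  have hrel : B ^ 2 = A ^ 2 * B * A⁻¹ ^ 2 :=
    Units.ext (by simpa [A, B, coe_units_inv] using matB_sq_eq_conj hj3)
  refine ⟨matB_sq_eq_conj hj3, det_matA, det_matB hj3, ?_, ?_⟩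
  · simpa [Fin.forall_fin_two, Units.ext_iff, A, B] using
      PresentedGroup.existsUnique_toGroup (gammaRels_lift_eq_one hrel)
  · intro ρ hA hB
    exact PresentedGroup.det_eq_one_of_forall_of ρ <| Fin.forall_fin_two.2
      ⟨hA ▸ det_matA, hB ▸ det_matB hj3⟩
end

section
/- Let ρ₁ : Γ₀ → GL₂(ℂ) be the representation sending a to (1/√2)·[[1, 1], [-1, 1]] and b to [[j, 0], [0, j²]] for j a primitive 3rd root of unity. Then there is no matrix g ∈ GL₂(ℂ) such that all matrix entries of g·ρ₁(γ)·g⁻¹ are integral over ℤ for every γ ∈ Γ₀; i.e., ρ₁ is not conjugate to a representation with values in GL₂ of the ring of algebraic integers. -/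
/-!
The trace of `ρ₁(ab) = AB` is `(j + j²)/√2 = -1/√2`. Traces are invariant under conjugation, and
the trace of a matrix with algebraic integer entries is an algebraic integer; but `1/√2` is not
one, since its square `1/2` is a rational number that is not an integer.
-/

open Matrix

lemma not_isIntegral_of_sq_eq_half {α : Type*} [Field α] [CharZero α] {x : α}
    (hx : x ^ 2 = 1 / 2) : ¬ IsIntegral ℤ x := by
  intro h
  obtain ⟨k, hk⟩ := (h.pow 2).exists_int_iff_exists_rat.mp ⟨1 / 2, by rw [hx]; norm_num⟩
  have hk2 : ((2 * k : ℤ) : α) = 1 := by push_cast; rw [← hk, hx]; norm_num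
  have hk2' : 2 * k = 1 := by exact_mod_cast hk2
  omega

lemma not_isIntegral_inv_sqrt_two : ¬ IsIntegral ℤ ((Real.sqrt 2 : ℂ)⁻¹) :=
  not_isIntegral_of_sq_eq_half <| by
    rw [inv_pow, ← Complex.ofReal_pow, Real.sq_sqrt zero_le_two]; norm_num

lemma trace_matA_mul_matB {j : ℂ} (hj : IsPrimitiveRoot j 3) :
    trace (matA * matB j) = -(Real.sqrt 2 : ℂ)⁻¹ := by
  have hsum : 1 + j + j ^ 2 = 0 := by
    simpa [Finset.sum_range_succ] using hj.geom_sum_eq_zero (by norm_num)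
  rw [matA, matB, smul_mul, trace_smul, mul_fin_two, trace_fin_two_of, smul_eq_mul]
  linear_combination (Real.sqrt 2 : ℂ)⁻¹ * hsum

lemma isIntegral_trace_of_forall_isIntegral {n R A : Type*} [Fintype n] [CommRing R] [CommRing A]
    [Algebra R A] {M : Matrix n n A} (hM : ∀ i k, IsIntegral R (M i k)) :
    IsIntegral R (trace M) :=
  IsIntegral.sum _ fun i _ => hM i i

/-- The representation `ρ₁` is not conjugate to a representation with all matrix entries
algebraic integers. -/
theorem rho1_not_integral (j : ℂ) (hj : IsPrimitiveRoot j 3)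
    (ρ : Gamma0 →* GL (Fin 2) ℂ)
    (ha : (ρ (PresentedGroup.of 0) : Matrix (Fin 2) (Fin 2) ℂ) = matA)
    (hb : (ρ (PresentedGroup.of 1) : Matrix (Fin 2) (Fin 2) ℂ) = matB j) :
    ¬ ∃ g : GL (Fin 2) ℂ, ∀ γ : Gamma0, ∀ i k : Fin 2,
      IsIntegral ℤ (((g * ρ γ * g⁻¹ : GL (Fin 2) ℂ) : Matrix (Fin 2) (Fin 2) ℂ) i k) := by
  rintro ⟨g, hg⟩
  have htrace :=
    isIntegral_trace_of_forall_isIntegral (hg (PresentedGroup.of 0 * PresentedGroup.of 1))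
  rw [Units.val_mul, Units.val_mul, trace_units_conj, map_mul, Units.val_mul, ha, hb,
    trace_matA_mul_matB hj] at htrace
  exact not_isIntegral_inv_sqrt_two (neg_neg (Real.sqrt 2 : ℂ)⁻¹ ▸ htrace.neg)
end

section
/- Let ρ₁ : Γ₀ → GL₂(ℂ) be the representation sending a to (1/√2)·[[1, 1], [-1, 1]] and b to [[j, 0], [0, j²]] for j a primitive 3rd root of unity, and let V be the 3-dimensional complex vector space of trace-zero 2×2 complex matrices with Γ₀ acting by γ·M = ρ₁(γ)·M·ρ₁(γ)⁻¹ (the adjoint representation Ad ρ₁). Then the first group cohomology H¹(Γ₀, V) vanishes; i.e., ρ₁ is cohomologically rigid. -/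
/-!
Since `Γ₀` is generated by `a` and `b`, a 1-cocycle `f` is a coboundary as soon as a single `m`
satisfies `f a = a·m - m` and `f b = b·m - m`. Evaluating `f` on both sides of the relation
`b²a² = a²b` gives the linear constraint `(1 + b - a²) f(b) = (1 - b²)(1 + a) f(a)`.
In coordinates, `Ad ρ₁(b)` fixes the diagonal and scales the two off-diagonal entries by `j²`
and `j`, while `Ad ρ₁(a)` is an explicit rotation; the constraint then cuts out exactly the
three linear conditions under which `m` can be solved for.
-/

open Matrix

universe u

namespace groupCohomology

variable {k G : Type u} [CommRing k] [Group G] {A : Rep k G}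

theorem subsingleton_H1_of_forall_mem_coboundaries₁
    (h : ∀ f : cocycles₁ A, ⇑f ∈ coboundaries₁ A) : Subsingleton (H1 A) := by
  refine ⟨fun x y => ?_⟩
  induction x using H1_induction_on with | h f => ?_
  induction y using H1_induction_on with | h g => ?_
  rw [(H1π_eq_zero_iff f).2 (h f), (H1π_eq_zero_iff g).2 (h g)]

theorem mem_coboundaries₁_of_closure_eq_top (f : cocycles₁ A) {S : Set G}
    (hS : Subgroup.closure S = ⊤) (m : A) (hf : ∀ s ∈ S, f s = A.ρ s m - m) :
    ⇑f ∈ coboundaries₁ A := by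
  have hcoc := (mem_cocycles₁_iff f).1 f.2
  have hcob : ∀ g ∈ Subgroup.closure S, f g = A.ρ g m - m := by
    intro g hg
    induction hg using Subgroup.closure_induction with
    | mem s hs => exact hf s hs
    | one => simp
    | mul g h _ _ hg hh => rw [hcoc, hg, hh, map_sub, map_mul, Module.End.mul_apply]; abel
    | inv g _ hg =>
      have h := hcoc g⁻¹ g
      rw [inv_mul_cancel, cocycles₁_map_one, hg, map_sub, ← Module.End.mul_apply, ← map_mul,
        inv_mul_cancel, map_one, Module.End.one_apply] at h
      rw [eq_sub_iff_add_eq, ← sub_eq_zero, h]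
      abel
  exact ⟨m, funext fun g => by rw [d₀₁_hom_apply, hcob g (hS ▸ Subgroup.mem_top g)]⟩

theorem cocycles₁_sq_mul_sq_relation (f : cocycles₁ A) {a b : G}
    (hab : b ^ 2 * a ^ 2 = a ^ 2 * b) :
    f b + A.ρ b (f b) - A.ρ (a ^ 2) (f b)
      = f a + A.ρ a (f a) - A.ρ (b ^ 2) (f a + A.ρ a (f a)) := by
  have hcoc := (mem_cocycles₁_iff f).1 f.2
  have h := congrArg f hab
  rw [hcoc, hcoc, sq, hcoc, sq a, hcoc, ← sq, ← sq] at h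
  rw [map_add] at h ⊢
  linear_combination (norm := abel) h

end groupCohomology

theorem gamma0_sq_mul_sq : (PresentedGroup.of 1 : Gamma0) ^ 2 * PresentedGroup.of 0 ^ 2 =
    PresentedGroup.of 0 ^ 2 * PresentedGroup.of 1 := by
  have h : PresentedGroup.mk gammaRels (FreeGroup.of 1 ^ 2 * FreeGroup.of 0 ^ 2 *
      (FreeGroup.of 1)⁻¹ * ((FreeGroup.of 0)⁻¹) ^ 2) = 1 :=
    (QuotientGroup.eq_one_iff _).2 (Subgroup.subset_normalClosure rfl)
  simp only [map_mul, map_pow, map_inv, inv_pow] at h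
  rwa [mul_inv_eq_one, mul_inv_eq_iff_eq_mul] at h

-- As `matAᵀ = matA⁻¹` and `matB (j ^ 2) = (matB j)⁻¹` when `j ^ 3 = 1`, these are `Ad ρ₁(a)`
-- and `Ad ρ₁(b)`.
noncomputable def adA (M : Matrix (Fin 2) (Fin 2) ℂ) : Matrix (Fin 2) (Fin 2) ℂ :=
  matA * M * matAᵀ

def adB (j : ℂ) (M : Matrix (Fin 2) (Fin 2) ℂ) : Matrix (Fin 2) (Fin 2) ℂ :=
  matB j * M * matB (j ^ 2)

theorem one_div_sqrt_two_mul_self :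
    (1 / (Real.sqrt 2 : ℂ)) * (1 / (Real.sqrt 2 : ℂ)) = 1 / 2 := by
  rw [div_mul_div_comm, one_mul, ← Complex.ofReal_mul, Real.mul_self_sqrt zero_le_two,
    Complex.ofReal_ofNat]

theorem matA_transpose_mul_matA : matAᵀ * matA = 1 := by
  rw [matA, transpose_smul, smul_mul_smul_comm, one_div_sqrt_two_mul_self]
  ext i k
  fin_cases i <;> fin_cases k <;> simp [mul_apply, Fin.sum_univ_two] <;> norm_num

theorem matB_sq_mul_matB {j : ℂ} (hj : j ^ 3 = 1) : matB (j ^ 2) * matB j = 1 := by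
  ext i k
  fin_cases i <;> fin_cases k <;> simp [matB, mul_apply, Fin.sum_univ_two] <;> grind

theorem adA_apply (M : Matrix (Fin 2) (Fin 2) ℂ) :
    adA M = !![(M 0 0 + M 0 1 + M 1 0 + M 1 1) / 2, (-M 0 0 + M 0 1 - M 1 0 + M 1 1) / 2;
      (-M 0 0 - M 0 1 + M 1 0 + M 1 1) / 2, (M 0 0 - M 0 1 - M 1 0 + M 1 1) / 2] := by
  rw [adA, matA, transpose_smul, Matrix.smul_mul, Matrix.mul_smul, Matrix.smul_mul, smul_smul,
    one_div_sqrt_two_mul_self]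
  ext i k
  fin_cases i <;> fin_cases k <;> simp [mul_apply, vecMul, dotProduct, Fin.sum_univ_two] <;> ring

theorem adB_apply {j : ℂ} (hj : j ^ 3 = 1) (M : Matrix (Fin 2) (Fin 2) ℂ) :
    adB j M = !![M 0 0, j ^ 2 * M 0 1; j * M 1 0, M 1 1] := by
  ext i k
  fin_cases i <;> fin_cases k <;>
    simp [adB, matB, mul_apply, vecMul, dotProduct, Fin.sum_univ_two] <;> grind

theorem exists_adA_sub_eq_and_adB_sub_eq {j : ℂ} (hj : j ^ 2 + j + 1 = 0)
    {X Y : Matrix (Fin 2) (Fin 2) ℂ} (hX : X.trace = 0) (hY : Y.trace = 0)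
    (h : Y + adB j Y - adA (adA Y) = X + adA X - adB j (adB j (X + adA X))) :
    ∃ m : Matrix (Fin 2) (Fin 2) ℂ, m.trace = 0 ∧ adA m - m = X ∧ adB j m - m = Y := by
  have hj3 : j ^ 3 = 1 := by linear_combination (j - 1) * hj
  rw [trace_fin_two] at hX hY
  have h00 := congrFun₂ h 0 0
  have h01 := congrFun₂ h 0 1
  have h10 := congrFun₂ h 1 0
  simp only [adB_apply hj3, adA_apply, of_apply, cons_val', cons_val_zero, cons_val_fin_one,
    cons_val_one, Matrix.sub_apply, Matrix.add_apply, sub_self] at h00 h01 h10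
  -- Given the trace conditions, the `(0, 0)` entry of `h` reads `3 * Y 0 0 = 0`, and adding `j²`
  -- times its `(0, 1)` entry to its `(1, 0)` entry leaves `2 * (1 - j²) * (X 1 0 - X 0 1) = 0`.
  have hY00 : Y 0 0 = 0 := by grind
  have hX10 : X 1 0 = X 0 1 := by grind
  have hY10 : Y 1 0 - j * Y 0 1 = (1 - j) * (X 0 1 - X 0 0) := by grind
  -- `adB j m - m` kills the diagonal of `m` and scales its off-diagonal entries by `j² - 1`
  -- and `j - 1`.
  refine ⟨!![-(X 0 0 + X 0 1) / 2, Y 0 1 / (j ^ 2 - 1); Y 1 0 / (j - 1), (X 0 0 + X 0 1) / 2],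
    by rw [trace_fin_two_of]; ring, ?_, ?_⟩
  · ext i k
    fin_cases i <;> fin_cases k <;> simp [adA_apply] <;> grind
  · ext i k
    fin_cases i <;> fin_cases k <;> simp [adB_apply hj3] <;> grind

/-- For `V` the `Γ₀`-module of trace-zero `2×2` complex matrices with action
`γ · M = ρ₁(γ) M ρ₁(γ)⁻¹` (the adjoint representation of `ρ₁`), the first group
cohomology `H¹(Γ₀, V)` vanishes: `ρ₁` is cohomologically rigid. -/
theorem rho1_cohomologically_rigid (j : ℂ) (hj : IsPrimitiveRoot j 3)
    (ρ : Gamma0 →* GL (Fin 2) ℂ)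
    (ha : (ρ (PresentedGroup.of 0) : Matrix (Fin 2) (Fin 2) ℂ) = matA)
    (hb : (ρ (PresentedGroup.of 1) : Matrix (Fin 2) (Fin 2) ℂ) = matB j)
    (sl2 : Submodule ℂ (Matrix (Fin 2) (Fin 2) ℂ))
    (hsl2 : ∀ M : Matrix (Fin 2) (Fin 2) ℂ, M ∈ sl2 ↔ Matrix.trace M = 0)
    (τ : Representation ℂ Gamma0 sl2)
    (hτ : ∀ (γ : Gamma0) (M : sl2),
      ((τ γ M : Matrix (Fin 2) (Fin 2) ℂ))
        = (ρ γ : Matrix (Fin 2) (Fin 2) ℂ) * (M : Matrix (Fin 2) (Fin 2) ℂ) *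
            (((ρ γ)⁻¹ : GL (Fin 2) ℂ) : Matrix (Fin 2) (Fin 2) ℂ)) :
    Subsingleton (groupCohomology.H1 (Rep.of τ)) := by
  have hj' : j ^ 2 + j + 1 = 0 := by
    have h := hj.geom_sum_eq_zero (by norm_num)
    simp only [Finset.sum_range_succ, Finset.sum_range_zero] at h
    linear_combination h
  have hτa (M : sl2) : (τ (PresentedGroup.of 0) M : Matrix (Fin 2) (Fin 2) ℂ) = adA M := by
    rw [hτ, Units.inv_eq_of_mul_eq_one_left (ha ▸ matA_transpose_mul_matA), ha, adA]
  have hτb (M : sl2) : (τ (PresentedGroup.of 1) M : Matrix (Fin 2) (Fin 2) ℂ) = adB j M := by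
    rw [hτ, Units.inv_eq_of_mul_eq_one_left (hb ▸ matB_sq_mul_matB hj.pow_eq_one), hb, adB]
  refine groupCohomology.subsingleton_H1_of_forall_mem_coboundaries₁ fun f => ?_
  have hrel := congrArg Subtype.val
    (groupCohomology.cocycles₁_sq_mul_sq_relation f gamma0_sq_mul_sq)
  simp only [pow_two, map_mul, Module.End.mul_apply, Submodule.coe_add, Submodule.coe_sub, hτa,
    hτb] at hrel
  obtain ⟨m, hm, hma, hmb⟩ := exists_adA_sub_eq_and_adB_sub_eq hj' ((hsl2 _).1 (f _).2)
    ((hsl2 _).1 (f _).2) hrel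
  refine groupCohomology.mem_coboundaries₁_of_closure_eq_top f
    (PresentedGroup.closure_range_of gammaRels) ⟨m, (hsl2 m).2 hm⟩ ?_
  simp only [Set.forall_mem_range, Fin.forall_fin_two]
  exact ⟨Subtype.ext (by simp [hτa, hma]), Subtype.ext (by simp [hτb, hmb])⟩
end
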